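/- arXiv:2003.04453 — 3 statements merged into one kernel-verified Lean document; each statement's English description precedes it below -/
import Mathlib

section
/- If D is a symmetric 2-(v,k,λ) design with λ ≥ 2 and B is a block, then the derived design D^B, with point set B and blocks {B' ∩ B : B' ∈ 𝓑, B' ≠ B}, is a 2-(k, λ, λ−1) design. -/
/-!
Double counting shows that every point of a 2-design lies on `r` blocks with
`r (k - 1) = (v - 1) λ`, and `#b = v` forces `r = k`. Fix a block `B` and let `x_j = #(B_j ∩ B)`
for the other `v - 1` blocks. Counting incident points and ordered pairs of points of `B` gives
`∑ x_j = k (k - 1) = (v - 1) λ` and `∑ x_j² = k (k - 1) λ = (v - 1) λ²`, so `∑ (x_j - λ)² = 0`: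
all other blocks meet `B` in exactly `λ` points. A pair of points of `B` then lies on `λ` blocks,
of which `B` is one, so on `λ - 1` blocks of the derived design.
-/

/-- A `t`-`(v,k,lam)` design: `X` is the point set with `v` points, blocks are indexed by the
finite index set `b`, each block `blk i` is a `k`-subset of `X`, and every `t`-subset of `X`
is contained in exactly `lam` blocks. -/
def IsDesign {α ι : Type*} [DecidableEq α] (X : Finset α) (b : Finset ι)
    (blk : ι → Finset α) (v k t lam : ℕ) : Prop :=
  X.card = v ∧ (∀ i ∈ b, blk i ⊆ X ∧ (blk i).card = k) ∧
    ∀ T ⊆ X, T.card = t → (b.filter fun i => T ⊆ blk i).card = lam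

open Finset

theorem Finset.eq_of_sum_eq_of_sum_sq_eq {ι : Type*} {s : Finset ι} {x : ι → ℕ} {c : ℕ}
    (h₁ : ∑ j ∈ s, x j = #s * c) (h₂ : ∑ j ∈ s, x j ^ 2 = #s * c ^ 2) :
    ∀ j ∈ s, x j = c := by
  have hvar : ∑ j ∈ s, ((x j : ℤ) - c) ^ 2 = 0 := by
    have h₁' : ∑ j ∈ s, (x j : ℤ) = #s * c := by exact_mod_cast h₁
    have h₂' : ∑ j ∈ s, (x j : ℤ) ^ 2 = #s * c ^ 2 := by exact_mod_cast h₂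
    simp only [sub_sq, sum_add_distrib, sum_sub_distrib, ← sum_mul, ← mul_sum, sum_const,
      nsmul_eq_mul, h₁', h₂']
    ring
  intro j hj
  have := (sum_eq_zero_iff_of_nonneg fun j _ => sq_nonneg _).mp hvar j hj
  exact_mod_cast sub_eq_zero.mp (pow_eq_zero_iff two_ne_zero |>.mp this)

section DoubleCounting

variable {α ι : Type*} [DecidableEq α]

theorem Finset.sum_card_inter_eq_sum_card_filter_mem (b : Finset ι) (blk : ι → Finset α)
    (S : Finset α) : ∑ i ∈ b, #(blk i ∩ S) = ∑ p ∈ S, #{i ∈ b | p ∈ blk i} := by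
  simp only [card_eq_sum_ones, sum_filter]
  rw [sum_comm]
  refine sum_congr rfl fun i _ => ?_
  rw [← sum_filter, filter_mem_eq_inter, inter_comm]

theorem Finset.sum_card_inter_sq_eq_sum_sum_card_filter (b : Finset ι) (blk : ι → Finset α)
    (S : Finset α) :
    ∑ i ∈ b, #(blk i ∩ S) ^ 2 = ∑ p ∈ S, ∑ q ∈ S, #{i ∈ b | p ∈ blk i ∧ q ∈ blk i} := by
  have := sum_card_inter_eq_sum_card_filter_mem b (fun i => blk i ×ˢ blk i) (S ×ˢ S)
  simpa only [product_inter_product, card_product, sq, sum_product, mem_product] using this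

end DoubleCounting

namespace IsDesign

variable {α ι : Type*} [DecidableEq α] {X : Finset α} {b : Finset ι} {blk : ι → Finset α}
  {v k t lam : ℕ}

theorem le_blockSize_of_pos (h : IsDesign X b blk v k t lam) (htv : t ≤ v) (hlam : 0 < lam) :
    t ≤ k := by
  obtain ⟨hX, hblk, hT⟩ := h
  obtain ⟨T, hTX, hTt⟩ := exists_subset_card_eq (hX ▸ htv)
  obtain ⟨i, hi⟩ : {i ∈ b | T ⊆ blk i}.Nonempty := by rw [← card_pos, hT T hTX hTt]; exact hlam
  rw [mem_filter] at hi
  exact hTt ▸ (hblk i hi.1).2 ▸ card_le_card hi.2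

theorem card_filter_mem_and_mem (h : IsDesign X b blk v k 2 lam) {p q : α} (hp : p ∈ X)
    (hq : q ∈ X) (hpq : p ≠ q) : #{i ∈ b | p ∈ blk i ∧ q ∈ blk i} = lam := by
  rw [← h.2.2 {p, q} (by simp [insert_subset_iff, hp, hq]) (card_pair hpq)]
  simp only [insert_subset_iff, singleton_subset_iff]

theorem card_filter_mem_mul_sub_one (h : IsDesign X b blk v k 2 lam) {p : α} (hp : p ∈ X) :
    #{i ∈ b | p ∈ blk i} * (k - 1) = (v - 1) * lam := by
  have hcount := sum_card_inter_eq_sum_card_filter_mem {i ∈ b | p ∈ blk i} blk (X.erase p)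
  have hblock : ∀ i ∈ {i ∈ b | p ∈ blk i}, #(blk i ∩ X.erase p) = k - 1 := by
    intro i hi
    rw [mem_filter] at hi
    rw [inter_erase, inter_eq_left.mpr (h.2.1 i hi.1).1, card_erase_of_mem hi.2,
      (h.2.1 i hi.1).2]
  have hpoint : ∀ q ∈ X.erase p, #{i ∈ {i ∈ b | p ∈ blk i} | q ∈ blk i} = lam := by
    intro q hq
    rw [filter_filter]
    exact h.card_filter_mem_and_mem hp (mem_of_mem_erase hq) (ne_of_mem_erase hq).symm
  rwa [sum_congr rfl hblock, sum_congr rfl hpoint, sum_const, sum_const, card_erase_of_mem hp,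
    h.1, smul_eq_mul, smul_eq_mul] at hcount

theorem card_filter_mem_eq_of_card_eq (h : IsDesign X b blk v k 2 lam) (hb : #b = v)
    (hk : 2 ≤ k) {p : α} (hp : p ∈ X) : #{i ∈ b | p ∈ blk i} = k := by
  have hconst : ∀ q ∈ X, #{i ∈ b | q ∈ blk i} = #{i ∈ b | p ∈ blk i} := fun q hq =>
    Nat.eq_of_mul_eq_mul_right (by omega)
      ((h.card_filter_mem_mul_sub_one hq).trans (h.card_filter_mem_mul_sub_one hp).symm)
  have hcount := sum_card_inter_eq_sum_card_filter_mem b blk X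
  rw [sum_congr rfl fun i hi => by rw [inter_eq_left.mpr (h.2.1 i hi).1, (h.2.1 i hi).2],
    sum_congr rfl hconst, sum_const, sum_const, hb, h.1, smul_eq_mul, smul_eq_mul] at hcount
  exact (Nat.eq_of_mul_eq_mul_left (h.1 ▸ card_pos.mpr ⟨p, hp⟩) hcount).symm

theorem card_inter_eq [DecidableEq ι] (h : IsDesign X b blk v k 2 lam) (hb : #b = v)
    (hk : 2 ≤ k) {i j : ι} (hi : i ∈ b) (hj : j ∈ b) (hji : j ≠ i) :
    #(blk j ∩ blk i) = lam := by
  obtain ⟨hBX, hB⟩ := h.2.1 i hi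
  have hr : ∀ p ∈ blk i, #{l ∈ b | p ∈ blk l} = k := fun p hp =>
    h.card_filter_mem_eq_of_card_eq hb hk (hBX hp)
  obtain ⟨p₀, hp₀⟩ : (blk i).Nonempty := card_pos.mp (by omega)
  have hfund : k * (k - 1) = (v - 1) * lam :=
    hr p₀ hp₀ ▸ h.card_filter_mem_mul_sub_one (hBX hp₀)
  have hsum : ∑ l ∈ b, #(blk l ∩ blk i) = k * k := by
    rw [sum_card_inter_eq_sum_card_filter_mem, sum_congr rfl hr, sum_const, hB, smul_eq_mul]
  have hsq : ∑ l ∈ b, #(blk l ∩ blk i) ^ 2 = k * (k + (k - 1) * lam) := by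
    rw [sum_card_inter_sq_eq_sum_sum_card_filter, sum_congr rfl fun p hp => ?_, sum_const, hB,
      smul_eq_mul]
    rw [← add_sum_erase _ _ hp, sum_congr rfl fun q hq =>
      h.card_filter_mem_and_mem (hBX hp) (hBX (mem_of_mem_erase hq)) (ne_of_mem_erase hq).symm,
      sum_const, card_erase_of_mem hp, hB, smul_eq_mul]
    simp only [and_self, hr p hp]
  rw [← add_sum_erase _ _ hi, inter_self, hB] at hsum hsq
  refine eq_of_sum_eq_of_sum_sq_eq (x := fun l => #(blk l ∩ blk i)) ?_ ?_ j
    (mem_erase.mpr ⟨hji, hj⟩)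
  · rw [card_erase_of_mem hi, hb, ← hfund, Nat.mul_sub_one]
    omega
  · rw [card_erase_of_mem hi, hb]
    rw [mul_add, ← mul_assoc, hfund] at hsq
    linarith

end IsDesign

/-- The derived design of a symmetric 2-(v,k,λ) design (λ ≥ 2) with respect to a block is
a 2-(k, λ, λ−1) design. -/
theorem derived_design_block {α ι : Type*} [DecidableEq α] [DecidableEq ι]
    (X : Finset α) (b : Finset ι) (blk : ι → Finset α) (v k lam : ℕ)
    (hk : 0 < k) (hkv : k < v) (hlam : 2 ≤ lam)
    (h : IsDesign X b blk v k 2 lam) (hsym : b.card = v)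
    (i0 : ι) (hi0 : i0 ∈ b) :
    IsDesign (blk i0) (b.erase i0) (fun j => blk j ∩ blk i0)
      k lam 2 (lam - 1) := by
  have hk2 : 2 ≤ k := h.le_blockSize_of_pos (by omega) (by omega)
  obtain ⟨hBX, hB⟩ := h.2.1 i0 hi0
  refine ⟨hB, fun j hj => ⟨inter_subset_right, ?_⟩, fun T hTB hT => ?_⟩
  · exact h.card_inter_eq hsym hk2 hi0 (mem_of_mem_erase hj) (ne_of_mem_erase hj)
  · have hfilter : {j ∈ b.erase i0 | T ⊆ blk j ∩ blk i0} = {j ∈ b | T ⊆ blk j}.erase i0 := by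
      simp only [← filter_erase, subset_inter_iff, hTB, and_true]
    rw [hfilter, card_erase_of_mem (mem_filter.mpr ⟨hi0, hTB⟩), h.2.2 T (hTB.trans hBX) hT]
end

section
/- Let D be a quasi-symmetric 2-(56,12,9) design with block intersection numbers 0 and 3, and let z be a point. Then the derived design D^z is a 1-(55,11,9) design with 45 blocks, and any two blocks of D^z intersect in exactly 2 points; consequently the dual of D^z is a 2-(45,9,2) design. -/
open Finset

theorem Finset.card_erase_inter_erase {α : Type*} [DecidableEq α] {s t : Finset α} {a : α}
    (hs : a ∈ s) (ht : a ∈ t) : (s.erase a ∩ t.erase a).card = (s ∩ t).card - 1 := by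
  rw [erase_inter, inter_erase, erase_idem, card_erase_of_mem (mem_inter.2 ⟨hs, ht⟩)]

namespace IsDesign

variable {α ι : Type*} [DecidableEq α] {X : Finset α} {b : Finset ι} {blk : ι → Finset α}
  {v k r lam : ℕ}

theorem card_filter_mem (h : IsDesign X b blk v k 1 r) {p : α} (hp : p ∈ X) :
    (b.filter fun i => p ∈ blk i).card = r := by
  simpa using h.2.2 {p} (singleton_subset_iff.2 hp) (card_singleton p)

theorem card_mul_eq_mul (h : IsDesign X b blk v k 1 r) : b.card * k = v * r := by
  rw [← h.1]
  refine card_mul_eq_card_mul (fun i p => p ∈ blk i) (fun i hi => ?_) fun p hp =>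
    h.card_filter_mem hp
  rw [bipartiteAbove, filter_mem_eq_inter, inter_eq_right.2 (h.2.1 i hi).1, (h.2.1 i hi).2]

theorem derived (h : IsDesign X b blk v k 2 lam) {z : α} (hz : z ∈ X) :
    IsDesign (X.erase z) (b.filter fun i => z ∈ blk i) (fun i => (blk i).erase z)
      (v - 1) (k - 1) 1 lam := by
  obtain ⟨hX, hblk, hpair⟩ := h
  refine ⟨by rw [card_erase_of_mem hz, hX], fun i hi => ?_, fun T hT hT1 => ?_⟩
  · rw [mem_filter] at hi
    refine ⟨erase_subset_erase z (hblk i hi.1).1, ?_⟩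
    rw [card_erase_of_mem hi.2, (hblk i hi.1).2]
  · obtain ⟨p, rfl⟩ := card_eq_one.1 hT1
    obtain ⟨hpz, hp⟩ := mem_erase.1 (singleton_subset_iff.1 hT)
    rw [← hpair {z, p} (insert_subset hz (singleton_subset_iff.2 hp)) (card_pair (Ne.symm hpz)),
      filter_filter]
    congr 1
    ext i
    simp [insert_subset_iff, hpz]

theorem dual [DecidableEq ι] (h : IsDesign X b blk v k 1 r) {μ : ℕ}
    (hinter : ∀ i ∈ b, ∀ j ∈ b, i ≠ j → (blk i ∩ blk j).card = μ) :
    IsDesign b X (fun p => b.filter fun i => p ∈ blk i) b.card r 2 μ := by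
  refine ⟨rfl, fun p hp => ⟨filter_subset _ _, h.card_filter_mem hp⟩, fun T hT hT2 => ?_⟩
  obtain ⟨i, j, hij, rfl⟩ := card_eq_two.1 hT2
  obtain ⟨hi, hj⟩ := insert_subset_iff.1 hT
  rw [singleton_subset_iff] at hj
  rw [← hinter i hi j hj hij]
  congr 1
  ext p
  simp only [mem_filter, insert_subset_iff, singleton_subset_iff, mem_inter]
  exact ⟨fun hp => ⟨hp.2.1.2, hp.2.2.2⟩,
    fun hp => ⟨(h.2.1 i hi).1 hp.1, ⟨hi, hp.1⟩, hj, hp.2⟩⟩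

end IsDesign

/-- The derived design with respect to a point z of a quasi-symmetric 2-(56,12,9) design with
intersection numbers 0 and 3 is a 1-(55,11,9) design with 45 blocks in which any two distinct
blocks meet in exactly 2 points; consequently its dual is a 2-(45,9,2) design. -/
theorem derived_of_qs_56_12_9 {α ι : Type*} [DecidableEq α] [DecidableEq ι]
    (X : Finset α) (b : Finset ι) (blk : ι → Finset α)
    (h : IsDesign X b blk 56 12 2 9)
    (hq : ∀ i ∈ b, ∀ j ∈ b, i ≠ j →
      (blk i ∩ blk j).card = 0 ∨ (blk i ∩ blk j).card = 3)
    (z : α) (hz : z ∈ X) :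
    (b.filter fun i => z ∈ blk i).card = 45 ∧
    (∀ i ∈ b.filter fun i => z ∈ blk i, ((blk i).erase z).card = 11) ∧
    (∀ p ∈ X.erase z,
      ((b.filter fun i => z ∈ blk i).filter fun i => p ∈ (blk i).erase z).card = 9) ∧
    (∀ i ∈ b.filter fun i => z ∈ blk i, ∀ j ∈ b.filter fun i => z ∈ blk i, i ≠ j →
      (((blk i).erase z) ∩ ((blk j).erase z)).card = 2) ∧
    -- the dual of the derived design is a 2-(45,9,2) design:
    IsDesign (α := ι) (ι := α) (b.filter fun i => z ∈ blk i) (X.erase z)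
      (fun p => (b.filter fun i => z ∈ blk i).filter fun i => p ∈ (blk i).erase z)
      45 9 2 2 := by
  set S := b.filter fun i => z ∈ blk i
  have hD : IsDesign (X.erase z) S (fun i => (blk i).erase z) 55 11 1 9 := h.derived hz
  have hS : S.card = 45 := by
    have := hD.card_mul_eq_mul
    omega
  have hinter :
      ∀ i ∈ S, ∀ j ∈ S, i ≠ j → ((blk i).erase z ∩ (blk j).erase z).card = 2 := by
    intro i hi j hj hij
    rw [mem_filter] at hi hj
    rw [card_erase_inter_erase hi.2 hj.2]
    rcases hq i hi.1 j hj.1 hij with h0 | h3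
    · exact absurd h0 (card_ne_zero_of_mem (mem_inter.2 ⟨hi.2, hj.2⟩))
    · rw [h3]
  exact ⟨hS, fun i hi => (hD.2.1 i hi).2, fun p hp => hD.card_filter_mem hp, hinter,
    hS ▸ hD.dual hinter⟩
end

section
/- If a quasi-symmetric 2-(57,12,11) design with block intersection numbers 0 and 3 exists, then its residual design with respect to any point is a quasi-symmetric 2-(56,12,9) design with block intersection numbers 0 and 3. -/
open Finset

section Counting

variable {α ι : Type*} [DecidableEq α]

theorem sum_card_filter_mem (Y : Finset α) (S : Finset ι) (B : ι → Finset α) :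
    ∑ w ∈ Y, #{i ∈ S | w ∈ B i} = ∑ i ∈ S, #(Y ∩ B i) := by
  simp_rw [← filter_mem_eq_inter]
  exact sum_card_bipartiteAbove_eq_sum_card_bipartiteBelow (fun w i => w ∈ B i)

theorem sum_card_filter_mem_sq (Y : Finset α) (S : Finset ι) (B : ι → Finset α) :
    ∑ w ∈ Y, #{i ∈ S | w ∈ B i} ^ 2 = ∑ i ∈ S, ∑ j ∈ S, #(Y ∩ (B i ∩ B j)) := by
  have hsq : ∀ w, #{i ∈ S | w ∈ B i} ^ 2 = #{p ∈ S ×ˢ S | w ∈ B p.1 ∧ w ∈ B p.2} := by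
    intro w
    rw [sq, ← card_product]
    congr 1
    ext ⟨i, j⟩
    simp only [mem_product, mem_filter]
    tauto
  have hpair : ∀ i j, #(Y ∩ (B i ∩ B j)) = #{w ∈ Y | w ∈ B i ∧ w ∈ B j} := by
    intro i j
    rw [← filter_mem_eq_inter]
    simp only [mem_inter]
  simp_rw [hsq, hpair]
  rw [← sum_product' (f := fun i j => #{w ∈ Y | w ∈ B i ∧ w ∈ B j})]
  exact sum_card_bipartiteAbove_eq_sum_card_bipartiteBelow
    (fun w (p : ι × ι) => w ∈ B p.1 ∧ w ∈ B p.2)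

end Counting

theorem eq_of_sum_eq_of_sum_sq_eq {α R : Type*} [CommRing R] [LinearOrder R]
    [IsStrictOrderedRing R] {s : Finset α} {f : α → R} {a : R}
    (h₁ : ∑ x ∈ s, f x = #s * a) (h₂ : ∑ x ∈ s, f x ^ 2 = #s * a ^ 2) :
    ∀ x ∈ s, f x = a := by
  have hvar : ∑ x ∈ s, (f x - a) ^ 2 = 0 := by
    simp_rw [sub_sq, sum_add_distrib, sum_sub_distrib, ← sum_mul, ← mul_sum, h₁, h₂,
      sum_const, nsmul_eq_mul]
    ring
  intro x hx
  have := (sum_eq_zero_iff_of_nonneg fun y _ => sq_nonneg (f y - a)).mp hvar x hx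
  exact sub_eq_zero.mp (pow_eq_zero_iff two_ne_zero |>.mp this)

theorem card_filter_mem_eq_of_card_inter {α ι : Type*} [DecidableEq α] {Y : Finset α}
    {S : Finset ι} {B : ι → Finset α} {k μ a : ℕ}
    (hk : ∀ i ∈ S, #(Y ∩ B i) = k) (hμ : ∀ i ∈ S, ∀ j ∈ S, i ≠ j → #(Y ∩ (B i ∩ B j)) = μ)
    (h₁ : #S * k = #Y * a) (h₂ : #S * (k + (#S - 1) * μ) = #Y * a ^ 2) :
    ∀ w ∈ Y, #{i ∈ S | w ∈ B i} = a := by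
  classical
  have hsum : ∑ w ∈ Y, #{i ∈ S | w ∈ B i} = #Y * a := by
    rw [sum_card_filter_mem, sum_congr rfl hk, sum_const, smul_eq_mul, h₁]
  have hrow : ∀ i ∈ S, ∑ j ∈ S, #(Y ∩ (B i ∩ B j)) = k + (#S - 1) * μ := by
    intro i hi
    rw [← add_sum_erase _ _ hi, inter_self, hk i hi,
      sum_congr rfl fun j hj => hμ i hi j (mem_of_mem_erase hj) (ne_of_mem_erase hj).symm,
      sum_const, card_erase_of_mem hi, smul_eq_mul]
  have hsum_sq : ∑ w ∈ Y, #{i ∈ S | w ∈ B i} ^ 2 = #Y * a ^ 2 := by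
    rw [sum_card_filter_mem_sq, sum_congr rfl hrow, sum_const, smul_eq_mul, h₂]
  intro w hw
  exact_mod_cast eq_of_sum_eq_of_sum_sq_eq (f := fun u => (#{i ∈ S | u ∈ B i} : ℤ)) (a := a)
    (by exact_mod_cast hsum) (by exact_mod_cast hsum_sq) w hw

theorem card_erase_erase_inter {α : Type*} [DecidableEq α] {X T : Finset α} {x y : α}
    (hT : T ⊆ X) (hx : x ∈ T) (hy : y ∈ T) (hxy : x ≠ y) :
    #((X.erase x).erase y ∩ T) = #T - 2 := by
  rw [erase_inter, erase_inter, inter_eq_right.mpr hT,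
    card_erase_of_mem (mem_erase.mpr ⟨hxy.symm, hy⟩), card_erase_of_mem hx, Nat.sub_sub]

section Designs

variable {α ι : Type*} [DecidableEq α]

def HasIntersectionNumbers (b : Finset ι) (blk : ι → Finset α) (x y : ℕ) : Prop :=
  ∀ i ∈ b, ∀ j ∈ b, i ≠ j → #(blk i ∩ blk j) = x ∨ #(blk i ∩ blk j) = y

theorem HasIntersectionNumbers.mono {b b' : Finset ι} {blk : ι → Finset α} {x y : ℕ}
    (h : HasIntersectionNumbers b blk x y) (hb : b' ⊆ b) : HasIntersectionNumbers b' blk x y :=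
  fun i hi j hj => h i (hb hi) j (hb hj)

variable {X : Finset α} {b : Finset ι} {blk : ι → Finset α} {v k lam : ℕ}

theorem IsDesign.card_filter_mem_mem (h : IsDesign X b blk v k 2 lam) {x y : α}
    (hx : x ∈ X) (hy : y ∈ X) (hxy : x ≠ y) : #{i ∈ b | x ∈ blk i ∧ y ∈ blk i} = lam := by
  have := h.2.2 {x, y} (insert_subset hx (singleton_subset_iff.mpr hy)) (card_pair hxy)
  simpa only [insert_subset_iff, singleton_subset_iff] using this

theorem IsDesign.card_filter_mem_mem_mem (h : IsDesign X b blk v k 2 lam) {μ a : ℕ}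
    (hq : HasIntersectionNumbers b blk 0 μ) (h₁ : lam * (k - 2) = (v - 2) * a)
    (h₂ : lam * (k - 2 + (lam - 1) * (μ - 2)) = (v - 2) * a ^ 2) {x y z : α}
    (hx : x ∈ X) (hy : y ∈ X) (hz : z ∈ X) (hxy : x ≠ y) (hxz : x ≠ z) (hyz : y ≠ z) :
    #{i ∈ b | x ∈ blk i ∧ y ∈ blk i ∧ z ∈ blk i} = a := by
  have hblk := h.2.1
  set S := {i ∈ b | x ∈ blk i ∧ y ∈ blk i}
  set Y := (X.erase x).erase y
  have hmem : ∀ i ∈ S, i ∈ b ∧ x ∈ blk i ∧ y ∈ blk i := fun i hi => by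
    simpa only [S, mem_filter] using hi
  have hk : ∀ i ∈ S, #(Y ∩ blk i) = k - 2 := by
    intro i hi
    obtain ⟨hib, hxi, hyi⟩ := hmem i hi
    rw [card_erase_erase_inter (hblk i hib).1 hxi hyi hxy, (hblk i hib).2]
  have hμ : ∀ i ∈ S, ∀ j ∈ S, i ≠ j → #(Y ∩ (blk i ∩ blk j)) = μ - 2 := by
    intro i hi j hj hij
    obtain ⟨hib, hxi, hyi⟩ := hmem i hi
    obtain ⟨hjb, hxj, hyj⟩ := hmem j hj
    have hxij : x ∈ blk i ∩ blk j := mem_inter.mpr ⟨hxi, hxj⟩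
    have hyij : y ∈ blk i ∩ blk j := mem_inter.mpr ⟨hyi, hyj⟩
    have hcard : #(blk i ∩ blk j) = μ :=
      (hq i hib j hjb hij).resolve_left (card_pos.mpr ⟨x, hxij⟩).ne'
    rw [card_erase_erase_inter (inter_subset_left.trans (hblk i hib).1) hxij hyij hxy, hcard]
  have hS : #S = lam := h.card_filter_mem_mem hx hy hxy
  have hY : #Y = v - 2 := by
    rw [card_erase_of_mem (mem_erase.mpr ⟨hxy.symm, hy⟩), card_erase_of_mem hx, h.1, Nat.sub_sub]
  have hzY : z ∈ Y := mem_erase.mpr ⟨hyz.symm, mem_erase.mpr ⟨hxz.symm, hz⟩⟩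
  have := card_filter_mem_eq_of_card_inter hk hμ (by rw [hS, hY, h₁]) (by rw [hS, hY, h₂]) z hzY
  simpa only [S, filter_filter, and_assoc] using this

theorem IsDesign.residual (h : IsDesign X b blk v k 2 lam) {z : α} (hz : z ∈ X) {a : ℕ}
    (ha : ∀ x ∈ X, ∀ y ∈ X, x ≠ y → x ≠ z → y ≠ z →
      #{i ∈ b | x ∈ blk i ∧ y ∈ blk i ∧ z ∈ blk i} = a) :
    IsDesign (X.erase z) {i ∈ b | z ∉ blk i} blk (v - 1) k 2 (lam - a) := by
  refine ⟨by rw [card_erase_of_mem hz, h.1], fun i hi => ?_, fun T hT hT2 => ?_⟩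
  · obtain ⟨hib, hzi⟩ := mem_filter.mp hi
    exact ⟨subset_erase.mpr ⟨(h.2.1 i hib).1, hzi⟩, (h.2.1 i hib).2⟩
  · obtain ⟨x, y, hxy, rfl⟩ := card_eq_two.mp hT2
    obtain ⟨hxz, hx⟩ := mem_erase.mp (hT (mem_insert_self x {y}))
    obtain ⟨hyz, hy⟩ := mem_erase.mp (hT (mem_insert_of_mem (mem_singleton_self y)))
    have hsplit := card_filter_add_card_filter_not (fun i => z ∈ blk i)
      (s := {i ∈ b | x ∈ blk i ∧ y ∈ blk i})
    simp only [filter_filter, and_assoc, h.card_filter_mem_mem hx hy hxy,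
      ha x hx y hy hxy hxz hyz] at hsplit
    simp only [filter_filter, insert_subset_iff, singleton_subset_iff]
    rw [filter_congr fun i _ => and_rotate, ← hsplit, Nat.add_sub_cancel_left]

end Designs

/-- The residual design with respect to any point of a quasi-symmetric 2-(57,12,11) design with
block intersection numbers 0 and 3 is a quasi-symmetric 2-(56,12,9) design with block
intersection numbers 0 and 3. -/
theorem residual_of_qs_57_12_11 {α ι : Type*} [DecidableEq α]
    (X : Finset α) (b : Finset ι) (blk : ι → Finset α)
    (h : IsDesign X b blk 57 12 2 11)
    (hq : ∀ i ∈ b, ∀ j ∈ b, i ≠ j →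
      (blk i ∩ blk j).card = 0 ∨ (blk i ∩ blk j).card = 3)
    (z : α) (hz : z ∈ X) :
    IsDesign (X.erase z) (b.filter fun i => z ∉ blk i) blk 56 12 2 9 ∧
    (∀ i ∈ b.filter fun i => z ∉ blk i, ∀ j ∈ b.filter fun i => z ∉ blk i, i ≠ j →
      (blk i ∩ blk j).card = 0 ∨ (blk i ∩ blk j).card = 3) := by
  have hq : HasIntersectionNumbers b blk 0 3 := hq
  have htriple : ∀ x ∈ X, ∀ y ∈ X, x ≠ y → x ≠ z → y ≠ z →
      #{i ∈ b | x ∈ blk i ∧ y ∈ blk i ∧ z ∈ blk i} = 2 :=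
    fun x hx y hy hxy hxz hyz =>
      h.card_filter_mem_mem_mem hq (by norm_num) (by norm_num) hx hy hz hxy hxz hyz
  exact ⟨h.residual hz htriple, hq.mono (filter_subset _ b)⟩
end
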